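/- arXiv:2512.25030 — 4 statements merged into one kernel-verified Lean document; each statement's English description precedes it below -/
import Mathlib

section
/- Let r > 0, a > 0, θ ∈ (0,1) and x > 0. Then the negative binomial mixture of Gamma densities collapses to a single Gamma density: Σ_{n=0}^∞ w_r(n) · (a^{n+r} x^{n+r−1} e^{−a x} / Γ(n+r)) = ((1−θ)a)^r x^{r−1} e^{−(1−θ)a x} / Γ(r). In other words, the w_r-mixture over n ∈ ℕ of the Gamma(r+n, a) densities equals the Gamma(r, (1−θ)a) density. (This is the paper's claim that the gamma process Z(t) ∼ Γ(λt, a) evaluated at the negative-binomially randomized time t + λ^{−1}B^−(λt) is again a gamma process with law Γ(λt, (1−θ)a).) -/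
open scoped BigOperators

/-- Negative binomial weights with real size parameter `r` and success parameter `θ`. -/
noncomputable def negBinWeight (r θ : ℝ) (n : ℕ) : ℝ :=
  (1 - θ) ^ r * (Real.Gamma ((n : ℝ) + r) / ((n.factorial : ℝ) * Real.Gamma r)) * θ ^ n

/-!
The factor `Γ(n + r)` of the negative binomial weight cancels the normalisation of the
`Gamma(n + r, a)` density, so the `n`-th term of the mixture is a fixed multiple of
`(θ a x)ⁿ / n!`. Summing the exponential series gives `e^{θ a x}`, which turns `e^{-a x}`
into `e^{-(1 - θ) a x}`.
-/

open Real Nat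

theorem rpow_natCast_add_sub_one {x : ℝ} (hx : x ≠ 0) (n : ℕ) (s : ℝ) :
    x ^ ((n : ℝ) + s - 1) = x ^ (s - 1) * x ^ n := by
  rw [← rpow_add_natCast hx]
  ring_nf

theorem negBinWeight_mul_gamma_density {r a θ x : ℝ} (hr : 0 < r) (ha : a ≠ 0) (hx : x ≠ 0)
    (n : ℕ) :
    negBinWeight r θ n *
        (a ^ ((n : ℝ) + r) * x ^ ((n : ℝ) + r - 1) * exp (-(a * x)) / Gamma ((n : ℝ) + r))
      = (1 - θ) ^ r * a ^ r * x ^ (r - 1) * exp (-(a * x)) / Gamma r *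
          ((θ * a * x) ^ n / n !) := by
  have hΓr : Gamma r ≠ 0 := (Gamma_pos_of_pos hr).ne'
  have hΓnr : Gamma ((n : ℝ) + r) ≠ 0 := (Gamma_pos_of_pos (by positivity)).ne'
  rw [negBinWeight, add_comm (n : ℝ) r, rpow_add_natCast ha, add_comm r,
    rpow_natCast_add_sub_one hx, add_comm (n : ℝ) r]
  field_simp
  ring

theorem tsum_pow_div_factorial (y : ℝ) : ∑' n : ℕ, y ^ n / n ! = exp y := by
  rw [exp_eq_exp_ℝ, NormedSpace.exp_eq_tsum_div]

theorem negBin_mixture_of_gamma_densities_general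
    (r a θ x : ℝ) (hr : 0 < r) (ha : 0 < a) (hθ1 : θ < 1) (hx : 0 < x) :
    ∑' n : ℕ, negBinWeight r θ n *
        (a ^ ((n : ℝ) + r) * x ^ ((n : ℝ) + r - 1) * Real.exp (-(a * x)) /
          Real.Gamma ((n : ℝ) + r))
      = ((1 - θ) * a) ^ r * x ^ (r - 1) * Real.exp (-((1 - θ) * a * x)) / Real.Gamma r := by
  simp_rw [negBinWeight_mul_gamma_density hr ha.ne' hx.ne', tsum_mul_left,
    tsum_pow_div_factorial]
  rw [mul_rpow (by linarith) ha.le, div_mul_eq_mul_div, mul_assoc _ (exp _), ← exp_add,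
    show -(a * x) + θ * a * x = -((1 - θ) * a * x) by ring]

theorem negBin_mixture_of_gamma_densities
    (r a θ x : ℝ) (hr : 0 < r) (ha : 0 < a) (hθ0 : 0 < θ) (hθ1 : θ < 1) (hx : 0 < x) :
    ∑' n : ℕ, negBinWeight r θ n *
        (a ^ ((n : ℝ) + r) * x ^ ((n : ℝ) + r - 1) * Real.exp (-(a * x)) /
          Real.Gamma ((n : ℝ) + r))
      = ((1 - θ) * a) ^ r * x ^ (r - 1) * Real.exp (-((1 - θ) * a * x)) / Real.Gamma r :=
  negBin_mixture_of_gamma_densities_general r a θ x hr ha hθ1 hx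
end

section
/- The function x ↦ g(x,t) is a probability density on the open positive orthant: for every t > 0, ∫_{(0,∞)^q} g(x,t) dx = 1, where the integral is with respect to q-dimensional Lebesgue measure. -/
/-!
Integrate the series term by term; the terms are nonnegative on the orthant, so this is legitimate
once the termwise integrals are summable. The `n`-th term factorises into `q` one-dimensional
integrals `∫₀^∞ (a y)^(n+s) y⁻¹ e^(-a y) dy = Γ(n+s)` (with `s = λt`), so it integrates to
`θ^n Γ(n+s) / n!`. Writing `Γ(n+s)` as Euler's integral and summing the exponential series under
the integral sign gives the negative binomial series `∑ θ^n Γ(n+s) / n! = Γ(s) (1-θ)^(-s)`, which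
cancels the normalising constant `(1-θ)^s / Γ(s)`.
-/

open scoped BigOperators
open MeasureTheory

/-- The density of the multivariate gamma subordinator at point `x` and time `t`. -/
noncomputable def mvGammaPdf (q : ℕ) (lam θ : ℝ) (a : Fin q → ℝ) (x : Fin q → ℝ) (t : ℝ) : ℝ :=
  ((1 - θ) ^ (lam * t) / Real.Gamma (lam * t)) *
    ∑' n : ℕ, (θ ^ n / ((n.factorial : ℝ) * Real.Gamma ((n : ℝ) + lam * t) ^ (q - 1))) *
      ∏ i, ((a i * x i) ^ ((n : ℝ) + lam * t) / x i * Real.exp (-(a i * x i)))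

open Set Real
open scoped Nat

lemma integrableOn_rpow_mul_exp_neg_mul {a r : ℝ} (ha : 0 < a) (hr : 0 < r) :
    IntegrableOn (fun y : ℝ => y ^ (a - 1) * exp (-(r * y))) (Ioi 0) := by
  simpa only [rpow_one, neg_mul] using
    integrableOn_rpow_mul_exp_neg_mul_rpow (p := 1) (by linarith) one_pos hr

lemma mul_rpow_div_mul_exp_neg_mul_eq {b y : ℝ} (hb : 0 ≤ b) (hy : 0 < y) (p : ℝ) :
    (b * y) ^ p / y * exp (-(b * y)) = b ^ p * (y ^ (p - 1) * exp (-(b * y))) := by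
  rw [mul_rpow hb hy.le, rpow_sub hy, rpow_one]
  ring

lemma integrableOn_mul_rpow_div_mul_exp_neg_mul {b p : ℝ} (hb : 0 < b) (hp : 0 < p) :
    IntegrableOn (fun y : ℝ => (b * y) ^ p / y * exp (-(b * y))) (Ioi 0) :=
  IntegrableOn.congr_fun ((integrableOn_rpow_mul_exp_neg_mul hp hb).const_mul (b ^ p))
    (fun _ hy => (mul_rpow_div_mul_exp_neg_mul_eq hb.le hy p).symm) measurableSet_Ioi

lemma integral_mul_rpow_div_mul_exp_neg_mul {b p : ℝ} (hb : 0 < b) (hp : 0 < p) :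
    ∫ y in Ioi (0 : ℝ), (b * y) ^ p / y * exp (-(b * y)) = Gamma p := by
  rw [setIntegral_congr_fun measurableSet_Ioi fun _ hy => mul_rpow_div_mul_exp_neg_mul_eq hb.le hy p,
    integral_const_mul, integral_rpow_mul_exp_neg_mul_Ioi hp hb, one_div, inv_rpow hb.le,
    ← mul_assoc, mul_inv_cancel₀ (rpow_pos_of_pos hb p).ne', one_mul]

section UnivPi

variable {ι 𝕜 : Type*} [Fintype ι] [RCLike 𝕜] {E : ι → Type*} [∀ i, MeasureSpace (E i)]
  [∀ i, SigmaFinite (volume : Measure (E i))]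

lemma integrableOn_univ_pi_prod {f : (i : ι) → E i → 𝕜} {s : (i : ι) → Set (E i)}
    (hf : ∀ i, IntegrableOn (f i) (s i)) :
    IntegrableOn (fun x => ∏ i, f i (x i)) (univ.pi s) := by
  rw [IntegrableOn, volume_pi, Measure.restrict_pi_pi]
  exact Integrable.fintype_prod_dep hf

lemma setIntegral_univ_pi_prod (f : (i : ι) → E i → 𝕜) (s : (i : ι) → Set (E i)) :
    ∫ x in univ.pi s, ∏ i, f i (x i) = ∏ i, ∫ y in s i, f i y := by
  rw [volume_pi, Measure.restrict_pi_pi, integral_fintype_prod_eq_prod]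

end UnivPi

lemma hasSum_pow_div_factorial_mul_exp_neg_mul_rpow (θ s : ℝ) {y : ℝ} (hy : 0 < y) :
    HasSum (fun n : ℕ => θ ^ n / n ! * (exp (-y) * y ^ ((n : ℝ) + s - 1)))
      (y ^ (s - 1) * exp (-((1 - θ) * y))) := by
  have hexp : HasSum (fun n : ℕ => (θ * y) ^ n / n !) (exp (θ * y)) := by
    rw [exp_eq_exp_ℝ]
    exact NormedSpace.expSeries_div_hasSum_exp (θ * y)
  rw [show -((1 - θ) * y) = -y + θ * y by ring, exp_add, ← mul_assoc, mul_comm (y ^ _)]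
  refine (hexp.mul_left (exp (-y) * y ^ (s - 1))).congr_fun fun n => ?_
  rw [add_sub_assoc, rpow_add hy, rpow_natCast, mul_pow]
  ring

lemma hasSum_pow_mul_Gamma_add_div_factorial {θ s : ℝ} (hθ : |θ| < 1) (hs : 0 < s) :
    HasSum (fun n : ℕ => θ ^ n * Gamma (n + s) / n !) (Gamma s / (1 - θ) ^ s) := by
  have hθ' : 0 < 1 - θ := by linarith [le_abs_self θ]
  have hθabs : 0 < 1 - |θ| := by linarith
  set F : ℕ → ℝ → ℝ := fun n y => θ ^ n / n ! * (exp (-y) * y ^ ((n : ℝ) + s - 1))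
  set bound : ℕ → ℝ → ℝ := fun n y => |θ| ^ n / n ! * (exp (-y) * y ^ ((n : ℝ) + s - 1))
  have h_norm : ∀ n, ∀ y ∈ Ioi (0 : ℝ), ‖F n y‖ = bound n y := fun n y hy => by
    simp only [F, bound, norm_mul, norm_div, norm_pow, Real.norm_eq_abs, abs_of_pos (exp_pos _),
      abs_of_nonneg (rpow_nonneg (le_of_lt hy) _), Nat.abs_cast]
  have h_int : ∀ n : ℕ, ∫ y in Ioi (0 : ℝ), F n y = θ ^ n * Gamma (n + s) / n ! := fun n => by
    rw [integral_const_mul, ← Gamma_eq_integral (by positivity)]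
    ring
  have h_bound_integrable : IntegrableOn (fun y => ∑' n, bound n y) (Ioi 0) :=
    IntegrableOn.congr_fun (integrableOn_rpow_mul_exp_neg_mul hs hθabs)
      (fun y hy => (hasSum_pow_div_factorial_mul_exp_neg_mul_rpow |θ| s hy).tsum_eq.symm)
      measurableSet_Ioi
  have h := hasSum_integral_of_dominated_convergence (μ := volume.restrict (Ioi 0))
    (f := fun y => y ^ (s - 1) * exp (-((1 - θ) * y))) bound
    (fun n => (by fun_prop : Measurable (F n)).aestronglyMeasurable)
    (fun n => (ae_restrict_iff' measurableSet_Ioi).2 (ae_of_all _ fun y hy => (h_norm n y hy).le))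
    ((ae_restrict_iff' measurableSet_Ioi).2 (ae_of_all _ fun y hy =>
      (hasSum_pow_div_factorial_mul_exp_neg_mul_rpow |θ| s hy).summable))
    h_bound_integrable
    ((ae_restrict_iff' measurableSet_Ioi).2 (ae_of_all _ fun y hy =>
      hasSum_pow_div_factorial_mul_exp_neg_mul_rpow θ s hy))
  rwa [funext h_int, integral_rpow_mul_exp_neg_mul_Ioi hs hθ', one_div, inv_rpow hθ'.le,
    inv_mul_eq_div] at h

lemma setIntegral_prod_mul_rpow_div_mul_exp_neg_mul {ι : Type*} [Fintype ι] {b : ι → ℝ}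
    (hb : ∀ i, 0 < b i) {p : ℝ} (hp : 0 < p) :
    ∫ x in univ.pi fun _ : ι => Ioi (0 : ℝ), ∏ i, (b i * x i) ^ p / x i * exp (-(b i * x i))
      = Gamma p ^ Fintype.card ι := by
  rw [setIntegral_univ_pi_prod (fun i y => (b i * y) ^ p / y * exp (-(b i * y))),
    Finset.prod_congr rfl fun i _ => integral_mul_rpow_div_mul_exp_neg_mul (hb i) hp,
    Finset.prod_const, Finset.card_univ]

theorem mvGammaPdf_integral_eq_one
    (q : ℕ) (hq : 1 ≤ q) (lam θ : ℝ) (hlam : 0 < lam) (hθ0 : 0 < θ) (hθ1 : θ < 1)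
    (a : Fin q → ℝ) (ha : ∀ i, 0 < a i) (t : ℝ) (ht : 0 < t) :
    ∫ x in Set.univ.pi fun _ : Fin q => Set.Ioi (0 : ℝ), mvGammaPdf q lam θ a x t = 1 := by
  have hs : 0 < lam * t := mul_pos hlam ht
  set S := univ.pi fun _ : Fin q => Ioi (0 : ℝ)
  set F : ℕ → (Fin q → ℝ) → ℝ := fun n x =>
    θ ^ n / ((n ! : ℝ) * Gamma (n + lam * t) ^ (q - 1)) *
      ∏ i, (a i * x i) ^ ((n : ℝ) + lam * t) / x i * exp (-(a i * x i))
  have hF_int (n : ℕ) : IntegrableOn (F n) S :=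
    (integrableOn_univ_pi_prod fun i =>
      integrableOn_mul_rpow_div_mul_exp_neg_mul (ha i) (by positivity)).const_mul _
  have hF_nonneg (n : ℕ) : ∀ x ∈ S, 0 ≤ F n x := fun x hx => by
    have : 0 < Gamma (n + lam * t) := Gamma_pos_of_pos (by positivity)
    refine mul_nonneg (by positivity) (Finset.prod_nonneg fun i _ => ?_)
    have := ha i
    have : 0 < x i := hx i (mem_univ i)
    positivity
  have hF_integral (n : ℕ) : ∫ x in S, F n x = θ ^ n * Gamma (n + lam * t) / n ! := by
    -- `q - 1` is truncated subtraction: write `q = m + 1` so that `Γ ^ q / Γ ^ (q - 1) = Γ`.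
    obtain ⟨m, rfl⟩ : ∃ m, q = m + 1 := ⟨q - 1, by omega⟩
    have : 0 < Gamma (n + lam * t) := Gamma_pos_of_pos (by positivity)
    rw [integral_const_mul, setIntegral_prod_mul_rpow_div_mul_exp_neg_mul ha (by positivity),
      Fintype.card_fin, Nat.add_sub_cancel, pow_succ]
    field_simp
  have h_series := hasSum_pow_mul_Gamma_add_div_factorial (abs_lt.2 ⟨by linarith, hθ1⟩) hs
  have h_sum := hasSum_integral_of_summable_integral_norm hF_int <|
    h_series.summable.congr fun n => by
      rw [← hF_integral n]
      exact setIntegral_congr_fun (MeasurableSet.univ_pi fun _ => measurableSet_Ioi)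
        fun x hx => (Real.norm_of_nonneg (hF_nonneg n x hx)).symm
  have h_integral : ∫ x in S, ∑' n, F n x = Gamma (lam * t) / (1 - θ) ^ (lam * t) :=
    h_sum.unique (funext hF_integral ▸ h_series)
  have : 0 < (1 - θ) ^ (lam * t) := rpow_pos_of_pos (by linarith) _
  have : 0 < Gamma (lam * t) := Gamma_pos_of_pos hs
  unfold mvGammaPdf
  rw [integral_const_mul, h_integral]
  field_simp
end

section
/- Joint Laplace–Stieltjes transform of the multivariate gamma subordinator: for every t > 0 and all s_1,…,s_q ≥ 0, ∫_{(0,∞)^q} exp(−Σ_{i=1}^q s_i x_i) · g(x,t) dx = ( (1−θ) / ( ∏_{i=1}^q (1 + s_i/a_i) − θ ) )^{λt}. -/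
/-!
Multiplying the density by `exp (-∑ sᵢ xᵢ)` turns each factor `(aᵢ xᵢ)^(n+α) / xᵢ · e^(-aᵢ xᵢ)`
(where `α = λ t`) into a Gamma integrand of rate `aᵢ + sᵢ`, with integral
`Γ(n+α) (aᵢ / (aᵢ + sᵢ))^(n+α)`. The `q` factors `Γ(n+α)` cancel the `Γ(n+α)^(q-1)` of the series,
so with `R = ∏ aᵢ / (aᵢ + sᵢ)` the transform is `(1-θ)^α R^α / Γ(α)` times the negative binomial
series `∑ Γ(n+α) / n! (θR)^n = Γ(α) (1 - θR)^(-α)`. All terms are nonnegative, which justifies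
integrating the series term by term.
-/

open scoped BigOperators
open MeasureTheory

open Real Set

theorem Real.Gamma_nat_add_eq_ascPochhammer_mul {α : ℝ} (hα : ∀ k : ℕ, α ≠ -k) (n : ℕ) :
    Gamma (n + α) = (ascPochhammer ℝ n).eval α * Gamma α := by
  induction n with
  | zero => simp
  | succ n ih =>
    have hne : (n : ℝ) + α ≠ 0 := fun h => hα n (by linarith)
    rw [Nat.cast_succ, add_right_comm, Gamma_add_one hne, ih, ascPochhammer_succ_eval]
    ring

theorem Real.multichoose_eq_Gamma_div {α : ℝ} (hα : ∀ k : ℕ, α ≠ -k) (n : ℕ) :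
    Ring.multichoose α n = Gamma (n + α) / (n.factorial * Gamma α) := by
  have h := Ring.factorial_nsmul_multichoose_eq_ascPochhammer α n
  rw [Polynomial.ascPochhammer_smeval_cast, Polynomial.ascPochhammer_smeval_eq_eval,
    nsmul_eq_mul] at h
  have hΓ : Gamma α ≠ 0 := Real.Gamma_ne_zero (by simpa [neg_eq_iff_eq_neg] using hα)
  rw [Gamma_nat_add_eq_ascPochhammer_mul hα, ← h]
  field_simp

theorem Real.hasSum_Gamma_nat_add_div_factorial_mul_pow {α y : ℝ} (hα : 0 < α) (hy : |y| < 1) :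
    HasSum (fun n : ℕ => Gamma (n + α) / n.factorial * y ^ n) (Gamma α * (1 - y) ^ (-α)) := by
  have hα' (k : ℕ) : α ≠ -k := ((neg_nonpos.2 k.cast_nonneg).trans_lt hα).ne'
  have h := (one_div_one_sub_rpow_hasFPowerSeriesOnBall_zero α).hasSum (y := y)
    (by simpa [edist_dist, Real.dist_eq] using hy)
  have h1y : 0 < 1 - y := by linarith [le_abs_self y]
  simp only [FormalMultilinearSeries.ofScalars_apply_eq, smul_eq_mul, zero_add] at h
  have hterm (n : ℕ) : Gamma (n + α) / n.factorial * y ^ n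
      = Gamma α * (Ring.choose (α + n - 1) n * y ^ n) := by
    rw [← Ring.multichoose_eq, multichoose_eq_Gamma_div hα']
    field_simp [(Gamma_pos_of_pos hα).ne']
  simp_rw [hterm, rpow_neg h1y.le, ← one_div]
  exact h.mul_left _

theorem MeasureTheory.integral_tsum_of_nonneg_of_hasSum {α ι : Type*} [MeasurableSpace α]
    {μ : Measure α} [Countable ι] {F : ι → α → ℝ} {I : ℝ} (hF : ∀ n, Integrable (F n) μ)
    (hF0 : ∀ n, 0 ≤ F n) (hI : HasSum (fun n => ∫ x, F n x ∂μ) I) :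
    ∫ x, ∑' n, F n x ∂μ = I := by
  have hnorm (n : ι) : ∫ x, ‖F n x‖ ∂μ = ∫ x, F n x ∂μ :=
    integral_congr_ae (.of_forall fun x => norm_of_nonneg (hF0 n x))
  rw [← integral_tsum_of_summable_integral_norm hF (by simpa only [hnorm] using hI.summable),
    hI.tsum_eq]

/-- Up to the factor `Γ c`, `gammaKernel a a c` is the Gamma density of shape `c` and rate `a`;
taking the rate `b = a + s` in the exponent multiplies it by `e^(-s y)`. -/
noncomputable def gammaKernel (a b c : ℝ) : ℝ → ℝ :=
  (Ioi 0).indicator fun y => (a * y) ^ c / y * exp (-(b * y))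

section GammaKernel

variable {a b c : ℝ}

theorem gammaKernel_nonneg (ha : 0 ≤ a) (y : ℝ) : 0 ≤ gammaKernel a b c y :=
  indicator_nonneg (fun y (hy : 0 < y) => by positivity) y

theorem gammaKernel_eqOn (ha : 0 ≤ a) :
    EqOn (fun y => (a * y) ^ c / y * exp (-(b * y)))
      (fun y => a ^ c * (y ^ (c - 1) * exp (-(b * y)))) (Ioi 0) := fun y (hy : 0 < y) => by
  simp only
  rw [mul_rpow ha hy.le, rpow_sub_one hy.ne']
  ring

theorem integrable_gammaKernel (ha : 0 ≤ a) (hb : 0 < b) (hc : 0 < c) :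
    Integrable (gammaKernel a b c) := by
  have h : IntegrableOn (fun y : ℝ => y ^ (c - 1) * exp (-(b * y))) (Ioi 0) := by
    simpa [neg_mul] using
      integrableOn_rpow_mul_exp_neg_mul_rpow (p := 1) (by linarith) one_pos hb
  exact (integrable_indicator_iff measurableSet_Ioi).2
    (IntegrableOn.congr_fun (h.const_mul _) (gammaKernel_eqOn ha).symm measurableSet_Ioi)

theorem integral_gammaKernel (ha : 0 ≤ a) (hb : 0 < b) (hc : 0 < c) :
    ∫ y, gammaKernel a b c y = Gamma c * (a / b) ^ c := by
  rw [gammaKernel, integral_indicator measurableSet_Ioi,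
    setIntegral_congr_fun measurableSet_Ioi (gammaKernel_eqOn ha), integral_const_mul,
    integral_rpow_mul_exp_neg_mul_Ioi hc hb, div_rpow ha hb.le, one_div, inv_rpow hb.le]
  ring

end GammaKernel

theorem integral_prod_gammaKernel {ι : Type*} [Fintype ι] {a b : ι → ℝ} {c : ℝ}
    (ha : ∀ i, 0 ≤ a i) (hb : ∀ i, 0 < b i) (hc : 0 < c) :
    ∫ x : ι → ℝ, ∏ i, gammaKernel (a i) (b i) c (x i)
      = Gamma c ^ Fintype.card ι * (∏ i, a i / b i) ^ c := by
  rw [integral_fintype_prod_volume_eq_prod (fun i => gammaKernel (a i) (b i) c),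
    Finset.prod_congr rfl fun i _ => integral_gammaKernel (ha i) (hb i) hc,
    Finset.prod_mul_distrib, Finset.prod_const, Finset.card_univ,
    finsetProd_rpow _ _ fun i _ => div_nonneg (ha i) (hb i).le]

noncomputable def mvGammaLaplaceTerm (q : ℕ) (α θ : ℝ) (a s : Fin q → ℝ) (n : ℕ)
    (x : Fin q → ℝ) : ℝ :=
  (1 - θ) ^ α / Gamma α * (θ ^ n / (n.factorial * Gamma (n + α) ^ (q - 1))) *
    ∏ i, gammaKernel (a i) (a i + s i) (n + α) (x i)

theorem indicator_exp_neg_mul_mvGammaPdf (q : ℕ) (lam θ t : ℝ) (a s x : Fin q → ℝ) :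
    (univ.pi fun _ => Ioi 0).indicator
        (fun x => exp (-(∑ i, s i * x i)) * mvGammaPdf q lam θ a x t) x
      = ∑' n, mvGammaLaplaceTerm q (lam * t) θ a s n x := by
  by_cases hx : x ∈ univ.pi fun _ => Ioi 0
  · have hK (n : ℕ) (i : Fin q) : gammaKernel (a i) (a i + s i) (n + lam * t) (x i)
        = exp (-(s i * x i)) * ((a i * x i) ^ (n + lam * t) / x i * exp (-(a i * x i))) := by
      rw [gammaKernel, indicator_of_mem (hx i (mem_univ i)), add_mul, neg_add, exp_add]
      ring
    have hprod (n : ℕ) : ∏ i, gammaKernel (a i) (a i + s i) (n + lam * t) (x i)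
        = exp (-(∑ i, s i * x i)) *
          ∏ i, ((a i * x i) ^ (n + lam * t) / x i * exp (-(a i * x i))) := by
      rw [Finset.prod_congr rfl fun i _ => hK n i, Finset.prod_mul_distrib, ← exp_sum,
        Finset.sum_neg_distrib]
    rw [indicator_of_mem hx, mvGammaPdf, ← tsum_mul_left, ← tsum_mul_left]
    refine tsum_congr fun n => ?_
    rw [mvGammaLaplaceTerm, hprod]
    ring
  · obtain ⟨i, hi⟩ : ∃ i, x i ∉ Ioi 0 := by simpa [mem_univ_pi] using hx
    have hprod (n : ℕ) : ∏ i, gammaKernel (a i) (a i + s i) (n + lam * t) (x i) = 0 :=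
      Finset.prod_eq_zero (Finset.mem_univ i) (indicator_of_notMem hi _)
    simp [indicator_of_notMem hx, mvGammaLaplaceTerm, hprod]

section LaplaceTerm

variable {q : ℕ} {α θ : ℝ} {a s : Fin q → ℝ}

theorem integrable_mvGammaLaplaceTerm (ha : ∀ i, 0 ≤ a i) (hs : ∀ i, 0 < a i + s i)
    (hα : 0 < α) (n : ℕ) : Integrable (mvGammaLaplaceTerm q α θ a s n) :=
  (Integrable.fintype_prod fun i =>
    integrable_gammaKernel (ha i) (hs i) (by positivity)).const_mul _

theorem mvGammaLaplaceTerm_nonneg (ha : ∀ i, 0 ≤ a i) (hθ0 : 0 ≤ θ) (hθ1 : θ ≤ 1) (hα : 0 < α)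
    (n : ℕ) : 0 ≤ mvGammaLaplaceTerm q α θ a s n := fun x => by
  have := Gamma_pos_of_pos hα
  have := Gamma_pos_of_pos (by positivity : 0 < n + α)
  have : 0 ≤ 1 - θ := by linarith
  exact mul_nonneg (by positivity) (Finset.prod_nonneg fun i _ => gammaKernel_nonneg (ha i) _)

theorem integral_mvGammaLaplaceTerm (hq : 1 ≤ q) (ha : ∀ i, 0 ≤ a i) (hs : ∀ i, 0 < a i + s i)
    (hα : 0 < α) (n : ℕ) :
    ∫ x, mvGammaLaplaceTerm q α θ a s n x
      = (1 - θ) ^ α / Gamma α * (∏ i, a i / (a i + s i)) ^ α *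
        (Gamma (n + α) / n.factorial * (θ * ∏ i, a i / (a i + s i)) ^ n) := by
  have hnα : 0 < n + α := by positivity
  have hR : 0 ≤ ∏ i, a i / (a i + s i) := Finset.prod_nonneg fun i _ => div_nonneg (ha i) (hs i).le
  have hΓq : Gamma (n + α) ^ q = Gamma (n + α) ^ (q - 1) * Gamma (n + α) := by
    rw [← pow_succ, Nat.sub_add_cancel hq]
  have := (Gamma_pos_of_pos hnα).ne'
  simp only [mvGammaLaplaceTerm]
  rw [integral_const_mul, integral_prod_gammaKernel ha hs hnα,
    Fintype.card_fin, hΓq, rpow_add' hR hnα.ne', rpow_natCast, mul_pow]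
  field_simp

theorem hasSum_integral_mvGammaLaplaceTerm (hq : 1 ≤ q) (ha : ∀ i, 0 ≤ a i)
    (hs : ∀ i, 0 < a i + s i) (hα : 0 < α) (hθR : |θ * ∏ i, a i / (a i + s i)| < 1) :
    HasSum (fun n => ∫ x, mvGammaLaplaceTerm q α θ a s n x)
      ((1 - θ) ^ α * (∏ i, a i / (a i + s i)) ^ α * (1 - θ * ∏ i, a i / (a i + s i)) ^ (-α)) := by
  have := (Gamma_pos_of_pos hα).ne'
  set R := ∏ i, a i / (a i + s i)
  have hsum : (1 - θ) ^ α * R ^ α * (1 - θ * R) ^ (-α)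
      = (1 - θ) ^ α / Gamma α * R ^ α * (Gamma α * (1 - θ * R) ^ (-α)) := by
    field_simp
  simp_rw [integral_mvGammaLaplaceTerm hq ha hs hα, hsum]
  exact (hasSum_Gamma_nat_add_div_factorial_mul_pow hα hθR).mul_left _

end LaplaceTerm

theorem one_sub_div_inv_sub_rpow {θ R α : ℝ} (hθ : θ ≤ 1) (hR : 0 < R) (hθR : θ * R < 1) :
    ((1 - θ) / (R⁻¹ - θ)) ^ α = (1 - θ) ^ α * R ^ α * (1 - θ * R) ^ (-α) := by
  have h1θR : 0 < 1 - θ * R := by linarith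
  rw [show R⁻¹ - θ = (1 - θ * R) / R by field_simp, div_div_eq_mul_div,
    div_rpow (by nlinarith) h1θR.le, mul_rpow (by linarith) hR.le, rpow_neg h1θR.le,
    div_eq_mul_inv]

theorem mvGammaPdf_laplace_stieltjes
    (q : ℕ) (hq : 1 ≤ q) (lam θ : ℝ) (hlam : 0 < lam) (hθ0 : 0 < θ) (hθ1 : θ < 1)
    (a : Fin q → ℝ) (ha : ∀ i, 0 < a i) (t : ℝ) (ht : 0 < t)
    (s : Fin q → ℝ) (hs : ∀ i, 0 ≤ s i) :
    (∫ x in Set.univ.pi fun _ : Fin q => Set.Ioi (0 : ℝ),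
        Real.exp (-(∑ i, s i * x i)) * mvGammaPdf q lam θ a x t)
      = ((1 - θ) / ((∏ i, (1 + s i / a i)) - θ)) ^ (lam * t) := by
  have hα : 0 < lam * t := mul_pos hlam ht
  have hb (i : Fin q) : 0 < a i + s i := by linarith [ha i, hs i]
  have hr (i : Fin q) : 0 < a i / (a i + s i) := div_pos (ha i) (hb i)
  have hR0 : 0 < ∏ i, a i / (a i + s i) := Finset.prod_pos fun i _ => hr i
  have hR1 : ∏ i, a i / (a i + s i) ≤ 1 := Finset.prod_le_one (fun i _ => (hr i).le)
    fun i _ => (div_le_one (hb i)).2 (by linarith [hs i])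
  have hθR : θ * ∏ i, a i / (a i + s i) < 1 := by nlinarith
  have hP : ∏ i, (1 + s i / a i) = (∏ i, a i / (a i + s i))⁻¹ := by
    rw [← Finset.prod_inv_distrib]
    exact Finset.prod_congr rfl fun i _ => by field_simp [(ha i).ne']
  rw [← integral_indicator (MeasurableSet.univ_pi fun _ => measurableSet_Ioi)]
  simp_rw [indicator_exp_neg_mul_mvGammaPdf]
  rw [integral_tsum_of_nonneg_of_hasSum
    (integrable_mvGammaLaplaceTerm (fun i => (ha i).le) hb hα)
    (mvGammaLaplaceTerm_nonneg (fun i => (ha i).le) hθ0.le hθ1.le hα)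
    (hasSum_integral_mvGammaLaplaceTerm hq (fun i => (ha i).le) hb hα
      (abs_lt.2 ⟨by nlinarith, hθR⟩)), hP]
  exact (one_sub_div_inv_sub_rpow hθ1.le hR0 hθR).symm
end

section
/- Gamma-mixed state probabilities of the generalized counting process (single coordinate of Eq. (stateMZ)): let k ≥ 1 be an integer, λ_1,…,λ_k > 0, λ_• = Σ_{j=1}^k λ_j, a > 0, and let r = λt > 0. Then for every n ∈ ℕ, ∫_0^∞ p(n,x) · γ_{r,a}(x) dx = (a/(a+λ_•))^{r} · Σ_{(m_1,…,m_k) ∈ Ω(k,n)} (Γ(η + r)/Γ(r)) · ∏_{j=1}^k ( (λ_j/(a+λ_•))^{m_j} / m_j! ), where η = m_1 + ⋯ + m_k. -/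
/-! For fixed `x`, `p(n, x)` is a finite sum over `Ω(k, n)` of products of independent Poisson
probabilities, and each product equals `C_m · x^η e^{-λ_• x}` with `η = Σ m_j`. Multiplied by the
Gamma density this is a constant times `x^{η+r-1} e^{-(a+λ_•)x}`, whose integral over `(0, ∞)` is
`Γ(η+r) / (a+λ_•)^{η+r}`; integrate term by term. -/

open scoped BigOperators
open MeasureTheory

/-- `Omega k n` is the (finite) set of `(m_1, …, m_k) ∈ ℕ^k` with `Σ_j j·m_j = n`
(indices `j` running over `1, …, k`). -/
def Omega (k n : ℕ) : Finset (Fin k → ℕ) :=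
  (Fintype.piFinset fun _ => Finset.range (n + 1)).filter fun m => ∑ j, (j.val + 1) * m j = n

/-- State probability of the generalized counting process with jump rates `Λ`. -/
noncomputable def gcpProb (k : ℕ) (Λ : Fin k → ℝ) (n : ℕ) (x : ℝ) : ℝ :=
  ∑ m ∈ Omega k n, ∏ j, ((Λ j * x) ^ (m j) / ((m j).factorial : ℝ) * Real.exp (-(Λ j * x)))

/-- The Gamma(r, b) probability density. -/
noncomputable def gammaPdf (r b x : ℝ) : ℝ :=
  b ^ r * x ^ (r - 1) * Real.exp (-(b * x)) / Real.Gamma r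

open Real Set Finset
open scoped Nat

lemma integrableOn_rpow_mul_exp_neg_mul_Ioi {c b : ℝ} (hc : 0 < c) (hb : 0 < b) :
    IntegrableOn (fun x : ℝ => x ^ (c - 1) * exp (-(b * x))) (Ioi 0) :=
  .of_integral_ne_zero (by rw [integral_rpow_mul_exp_neg_mul_Ioi hc hb]; positivity)

section GammaMixture

variable {a r s : ℝ}

lemma pow_mul_exp_neg_mul_mul_gammaPdf (η : ℕ) {x : ℝ} (hx : 0 < x) :
    x ^ η * exp (-(s * x)) * gammaPdf r a x
      = a ^ r / Gamma r * (x ^ ((η : ℝ) + r - 1) * exp (-((a + s) * x))) := by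
  rw [gammaPdf, add_sub_assoc, rpow_add hx, rpow_natCast, add_mul, neg_add, exp_add]
  ring

lemma integrableOn_pow_mul_exp_neg_mul_mul_gammaPdf (hr : 0 < r) (has : 0 < a + s) (η : ℕ) :
    IntegrableOn (fun x => x ^ η * exp (-(s * x)) * gammaPdf r a x) (Ioi 0) :=
  IntegrableOn.congr_fun ((integrableOn_rpow_mul_exp_neg_mul_Ioi (by positivity) has).const_mul _)
    (fun _ hx => (pow_mul_exp_neg_mul_mul_gammaPdf η hx).symm) measurableSet_Ioi

lemma integral_pow_mul_exp_neg_mul_mul_gammaPdf (ha : 0 ≤ a) (hr : 0 < r) (has : 0 < a + s)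
    (η : ℕ) :
    ∫ x in Ioi 0, x ^ η * exp (-(s * x)) * gammaPdf r a x
      = (a / (a + s)) ^ r * (Gamma (η + r) / Gamma r) * (a + s)⁻¹ ^ η := by
  rw [setIntegral_congr_fun measurableSet_Ioi fun _ hx => pow_mul_exp_neg_mul_mul_gammaPdf η hx,
    integral_const_mul, integral_rpow_mul_exp_neg_mul_Ioi (by positivity) has,
    rpow_add (by positivity), rpow_natCast, div_rpow ha has.le, one_div, inv_rpow has.le]
  ring

end GammaMixture

section JointPoisson

variable {ι : Type*} [Fintype ι] (Λ : ι → ℝ) (m : ι → ℕ)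

noncomputable def jointPoissonPMF (x : ℝ) : ℝ :=
  ∏ j, ((Λ j * x) ^ m j / ((m j)! : ℝ) * exp (-(Λ j * x)))

lemma prod_mul_pow_div_factorial (y : ℝ) :
    ∏ j, (Λ j * y) ^ m j / ((m j)! : ℝ) = (∏ j, Λ j ^ m j / ((m j)! : ℝ)) * y ^ ∑ j, m j := by
  rw [← prod_pow_eq_pow_sum, ← prod_mul_distrib]
  exact prod_congr rfl fun j _ => by rw [mul_pow]; ring

lemma jointPoissonPMF_eq (x : ℝ) :
    jointPoissonPMF Λ m x
      = (∏ j, Λ j ^ m j / ((m j)! : ℝ)) * (x ^ (∑ j, m j) * exp (-((∑ j, Λ j) * x))) := by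
  rw [jointPoissonPMF, prod_mul_distrib, ← exp_sum, prod_mul_pow_div_factorial, sum_mul,
    sum_neg_distrib, mul_assoc]

variable {a r : ℝ}

lemma jointPoissonPMF_mul_gammaPdf (x : ℝ) :
    jointPoissonPMF Λ m x * gammaPdf r a x
      = (∏ j, Λ j ^ m j / ((m j)! : ℝ)) *
          (x ^ (∑ j, m j) * exp (-((∑ j, Λ j) * x)) * gammaPdf r a x) := by
  rw [jointPoissonPMF_eq, mul_assoc]

lemma integrableOn_jointPoissonPMF_mul_gammaPdf (hr : 0 < r) (has : 0 < a + ∑ j, Λ j) :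
    IntegrableOn (fun x => jointPoissonPMF Λ m x * gammaPdf r a x) (Ioi 0) := by
  simp_rw [jointPoissonPMF_mul_gammaPdf]
  exact (integrableOn_pow_mul_exp_neg_mul_mul_gammaPdf hr has _).const_mul _

lemma integral_jointPoissonPMF_mul_gammaPdf (ha : 0 ≤ a) (hr : 0 < r) (has : 0 < a + ∑ j, Λ j) :
    ∫ x in Ioi 0, jointPoissonPMF Λ m x * gammaPdf r a x
      = (a / (a + ∑ j, Λ j)) ^ r * (Gamma ((∑ j, m j : ℕ) + r) / Gamma r *
          ∏ j, (Λ j / (a + ∑ j, Λ j)) ^ m j / ((m j)! : ℝ)) := by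
  simp_rw [jointPoissonPMF_mul_gammaPdf, integral_const_mul,
    integral_pow_mul_exp_neg_mul_mul_gammaPdf ha hr has, div_eq_mul_inv (Λ _),
    prod_mul_pow_div_factorial]
  ring

end JointPoisson

lemma gcpProb_eq_sum_jointPoissonPMF (k : ℕ) (Λ : Fin k → ℝ) (n : ℕ) (x : ℝ) :
    gcpProb k Λ n x = ∑ m ∈ Omega k n, jointPoissonPMF Λ m x :=
  rfl

theorem gcp_gamma_mixed_state_probabilities_general
    (k : ℕ) (Λ : Fin k → ℝ) (hΛ : ∀ j, 0 < Λ j)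
    (a r : ℝ) (ha : 0 < a) (hr : 0 < r) (n : ℕ) :
    (∫ x in Set.Ioi (0 : ℝ), gcpProb k Λ n x * gammaPdf r a x)
      = (a / (a + ∑ j, Λ j)) ^ r *
          ∑ m ∈ Omega k n, (Real.Gamma ((∑ j, m j : ℕ) + r) / Real.Gamma r) *
            ∏ j, ((Λ j / (a + ∑ j', Λ j')) ^ (m j) / ((m j).factorial : ℝ)) := by
  have has : 0 < a + ∑ j, Λ j := add_pos_of_pos_of_nonneg ha (sum_nonneg fun j _ => (hΛ j).le)
  simp_rw [gcpProb_eq_sum_jointPoissonPMF, sum_mul]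
  rw [integral_finsetSum _ fun m _ => integrableOn_jointPoissonPMF_mul_gammaPdf Λ m hr has,
    mul_sum]
  exact sum_congr rfl fun m _ => integral_jointPoissonPMF_mul_gammaPdf Λ m ha.le hr has

theorem gcp_gamma_mixed_state_probabilities
    (k : ℕ) (hk : 1 ≤ k) (Λ : Fin k → ℝ) (hΛ : ∀ j, 0 < Λ j)
    (a r : ℝ) (ha : 0 < a) (hr : 0 < r) (n : ℕ) :
    (∫ x in Set.Ioi (0 : ℝ), gcpProb k Λ n x * gammaPdf r a x)
      = (a / (a + ∑ j, Λ j)) ^ r *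
          ∑ m ∈ Omega k n, (Real.Gamma ((∑ j, m j : ℕ) + r) / Real.Gamma r) *
            ∏ j, ((Λ j / (a + ∑ j', Λ j')) ^ (m j) / ((m j).factorial : ℝ)) :=
  gcp_gamma_mixed_state_probabilities_general k Λ hΛ a r ha hr n
end
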